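/- Let Δ be a finite connected graph with G ≤ Aut(Δ) satisfying Hypothesis (⋆) at every vertex, and let (x,y) be an arc. If E(G_x^{[1]}) = E(G_{x,y}) = E(G_y^{[1]}), then E(G_{x,y}) = 1. -/

import Mathlib

open Equiv Subgroup

/-- `N` (a subgroup of `Perm V`) acts transitively on the neighbourhood of `x`. -/
def transOn {V : Type*} (Δ : SimpleGraph V) (N : Subgroup (Equiv.Perm V)) (x : V) : Prop :=
  ∀ u ∈ Δ.neighborSet x, ∀ v ∈ Δ.neighborSet x, ∃ g ∈ N, g u = v

/-- The permutation group induced by `N` on the neighbourhood of `x` is semiregular. -/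
def semiregOn {V : Type*} (Δ : SimpleGraph V) (N : Subgroup (Equiv.Perm V)) (x : V) : Prop :=
  ∀ g ∈ N, (∃ u ∈ Δ.neighborSet x, g u = u) → ∀ v ∈ Δ.neighborSet x, g v = v

/-- The stabiliser `G_x`. -/
def vstab {V : Type*} (G : Subgroup (Equiv.Perm V)) (x : V) : Subgroup (Equiv.Perm V) :=
  G ⊓ MulAction.stabilizer (Equiv.Perm V) x

/-- `G_x^{[i]}`: pointwise stabiliser of the ball of radius `i` around `x`. -/
def ball {V : Type*} (Δ : SimpleGraph V) (G : Subgroup (Equiv.Perm V)) (x : V) (i : ℕ) :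
    Subgroup (Equiv.Perm V) :=
  G ⊓ ⨅ z ∈ {z : V | Δ.dist x z ≤ i}, MulAction.stabilizer (Equiv.Perm V) z

/-- `K` is a normal subgroup of `H` (both subgroups of `Perm V`). -/
def normalIn {V : Type*} (K H : Subgroup (Equiv.Perm V)) : Prop :=
  K ≤ H ∧ ∀ h ∈ H, ∀ k ∈ K, h * k * h⁻¹ ∈ K

/-- `O_p(H)`: the largest normal `p`-subgroup of `H`. -/
def Op {V : Type*} (p : ℕ) (H : Subgroup (Equiv.Perm V)) : Subgroup (Equiv.Perm V) :=
  sSup {K | normalIn K H ∧ IsPGroup p K}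

/-- `E_x = ⟨O_p(G_{x,z}) : z ∈ Δ(x)⟩`. -/
def Ep {V : Type*} (Δ : SimpleGraph V) (G : Subgroup (Equiv.Perm V)) (p : ℕ) (x : V) :
    Subgroup (Equiv.Perm V) :=
  ⨆ z ∈ Δ.neighborSet x, Op p (vstab G x ⊓ vstab G z)

/-- `C_{G_x}(G_x^{[1]})`. -/
def locCent {V : Type*} (Δ : SimpleGraph V) (G : Subgroup (Equiv.Perm V)) (x : V) :
    Subgroup (Equiv.Perm V) :=
  vstab G x ⊓ Subgroup.centralizer ((ball Δ G x 1 : Subgroup (Equiv.Perm V)) : Set (Equiv.Perm V))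

/-- Hypothesis (⋆). -/
def StarHyp {V : Type*} (Δ : SimpleGraph V) (G : Subgroup (Equiv.Perm V)) : Prop :=
  ∀ x : V,
    transOn Δ (vstab G x) x ∧
    (transOn Δ (locCent Δ G x) x ∨ semiregOn Δ (locCent Δ G x) x) ∧
    ∀ p : ℕ, p.Prime → (transOn Δ (Ep Δ G p x) x ∨ semiregOn Δ (Ep Δ G p x) x)

/-- `G` is a group of automorphisms of `Δ`. -/
def isAut {V : Type*} (Δ : SimpleGraph V) (G : Subgroup (Equiv.Perm V)) : Prop :=
  ∀ g ∈ G, ∀ u v : V, Δ.Adj (g u) (g v) ↔ Δ.Adj u v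

/-- `K` is a subnormal subgroup of `H`. -/
def subnormalIn {V : Type*} (K H : Subgroup (Equiv.Perm V)) : Prop :=
  ∃ (n : ℕ) (c : ℕ → Subgroup (Equiv.Perm V)),
    c 0 = K ∧ c n = H ∧ ∀ i < n, normalIn (c i) (c (i + 1))

/-- `K` is quasisimple: perfect and simple modulo its centre. -/
def IsQuasisimple {V : Type*} (K : Subgroup (Equiv.Perm V)) : Prop :=
  commutator ↥K = ⊤ ∧ IsSimpleGroup (↥K ⧸ Subgroup.center ↥K)

/-- `E(H)`: the layer, generated by the components of `H`. -/
def layer {V : Type*} (H : Subgroup (Equiv.Perm V)) : Subgroup (Equiv.Perm V) :=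
  sSup {K | subnormalIn K H ∧ IsQuasisimple K}

/-- `F(H)`: the Fitting subgroup of `H`. -/
def fitting {V : Type*} (H : Subgroup (Equiv.Perm V)) : Subgroup (Equiv.Perm V) :=
  sSup {K | normalIn K H ∧ Group.IsNilpotent ↥K}

/-- `F*(H) = E(H)F(H)`: the generalised Fitting subgroup of `H`. -/
def genFitting {V : Type*} (H : Subgroup (Equiv.Perm V)) : Subgroup (Equiv.Perm V) :=
  layer H ⊔ fitting H

/-!
Conjugation permutes the components of a group, so `E(H)` is normalised by everything that
normalises `H`. As `G_x` normalises `G_x^{[1]}`, the hypotheses make `E := E(G_{x,y})` normal in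
`⟨G_x, G_y⟩`. By local transitivity and connectedness every vertex is the image of `x` or `y`
under `⟨G_x, G_y⟩`; since `E` fixes `x` and `y`, so does each of its conjugates, hence `E` fixes
every vertex and is trivial.
-/

section GroupIso
variable {A B : Type*} [Group A] [Group B]

lemma commutator_eq_top_of_mulEquiv (e : A ≃* B) (h : commutator A = ⊤) : commutator B = ⊤ :=
  calc commutator B = (commutator A).map e.toMonoidHom := by
        rw [map_commutator_eq, MonoidHom.range_eq_top.mpr e.surjective, commutator_def]
    _ = ⊤ := by rw [h, map_top_of_surjective _ e.surjective]

lemma map_center_mulEquiv (e : A ≃* B) :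
    (center A).map e.toMonoidHom = center B := by
  ext b
  rw [mem_map_equiv, ← SetLike.mem_coe, ← SetLike.mem_coe, coe_center, coe_center]
  exact MulEquivClass.apply_mem_center_iff e.symm

lemma isSimpleGroup_quotient_center_of_mulEquiv (e : A ≃* B)
    (h : IsSimpleGroup (A ⧸ center A)) : IsSimpleGroup (B ⧸ center B) :=
  (QuotientGroup.congr _ _ e (map_center_mulEquiv e)).isSimpleGroup_congr.mp h

end GroupIso

section PermGroup
variable {V : Type*}

lemma subnormalIn.le {K H : Subgroup (Perm V)} (h : subnormalIn K H) : K ≤ H := by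
  obtain ⟨n, c, rfl, rfl, hstep⟩ := h
  suffices ∀ i ≤ n, c 0 ≤ c i from this n le_rfl
  intro i
  induction i with
  | zero => exact fun _ => le_rfl
  | succ j ih => exact fun hj => (ih (by omega)).trans (hstep j (by omega)).1

lemma layer_le_self (H : Subgroup (Perm V)) : layer H ≤ H :=
  sSup_le fun _ hK => hK.1.le

variable (e : Perm V ≃* Perm V)

lemma normalIn.map {K H : Subgroup (Perm V)} (h : normalIn K H) :
    normalIn (K.map e.toMonoidHom) (H.map e.toMonoidHom) := by
  refine ⟨map_mono h.1, fun a ha b hb => ?_⟩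
  rw [mem_map_equiv] at *
  simpa using h.2 _ ha _ hb

lemma subnormalIn.map {K H : Subgroup (Perm V)} (h : subnormalIn K H) :
    subnormalIn (K.map e.toMonoidHom) (H.map e.toMonoidHom) := by
  obtain ⟨n, c, rfl, rfl, hstep⟩ := h
  exact ⟨n, fun i => (c i).map e.toMonoidHom, rfl, rfl, fun i hi => (hstep i hi).map e⟩

lemma IsQuasisimple.map {K : Subgroup (Perm V)} (h : IsQuasisimple K) :
    IsQuasisimple (K.map e.toMonoidHom) :=
  let f := K.equivMapOfInjective e.toMonoidHom e.injective
  ⟨commutator_eq_top_of_mulEquiv f h.1, isSimpleGroup_quotient_center_of_mulEquiv f h.2⟩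

lemma map_layer_le (H : Subgroup (Perm V)) :
    (layer H).map e.toMonoidHom ≤ layer (H.map e.toMonoidHom) := by
  rw [layer, (gc_map_comap e.toMonoidHom).l_sSup]
  exact iSup₂_le fun _ hK => le_sSup ⟨hK.1.map e, hK.2.map e⟩

lemma layer_map (H : Subgroup (Perm V)) :
    layer (H.map e.toMonoidHom) = (layer H).map e.toMonoidHom := by
  refine le_antisymm ?_ (map_layer_le e H)
  rw [map_equiv_eq_comap_symm' e (layer H), ← map_le_iff_le_comap]
  refine (map_layer_le e.symm _).trans_eq ?_
  rw [map_equiv_eq_comap_symm', e.symm_symm, comap_map_eq_self_of_injective e.injective]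

lemma normalizer_le_normalizer_layer (H : Subgroup (Perm V)) :
    normalizer (H : Set (Perm V)) ≤ normalizer (layer H : Set (Perm V)) := fun g hg => by
  rw [mem_normalizer_iff_map_conj_eq, ← MulEquiv.toMonoidHom_eq_coe] at hg ⊢
  rw [← layer_map, hg]

end PermGroup

theorem SimpleGraph.Iso.dist_map_le {V W : Type*} {Δ : SimpleGraph V} {Δ' : SimpleGraph W}
    (φ : Δ ≃g Δ') (u v : V) : Δ'.dist (φ u) (φ v) ≤ Δ.dist u v := by
  by_cases h : Δ.Reachable u v
  · obtain ⟨p, hp⟩ := h.exists_walk_length_eq_dist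
    exact (Δ'.dist_le (p.map φ.toHom)).trans (by rw [SimpleGraph.Walk.length_map, hp])
  · rw [SimpleGraph.dist_eq_zero_of_not_reachable (mt φ.reachable_iff.mp h)]
    exact Nat.zero_le _

theorem SimpleGraph.Iso.dist_map {V W : Type*} {Δ : SimpleGraph V} {Δ' : SimpleGraph W}
    (φ : Δ ≃g Δ') (u v : V) : Δ'.dist (φ u) (φ v) = Δ.dist u v :=
  le_antisymm (φ.dist_map_le u v) (by simpa using φ.symm.dist_map_le (φ u) (φ v))

section Automorphisms
variable {V : Type*} {Δ : SimpleGraph V} {G : Subgroup (Perm V)}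

lemma isAut.dist_apply (hG : isAut Δ G) {g : Perm V} (hg : g ∈ G) (u v : V) :
    Δ.dist (g u) (g v) = Δ.dist u v :=
  SimpleGraph.Iso.dist_map (⟨g, hG g hg _ _⟩ : Δ ≃g Δ) u v

lemma mem_vstab {x : V} {g : Perm V} : g ∈ vstab G x ↔ g ∈ G ∧ g x = x := by
  simp [vstab, MulAction.mem_stabilizer_iff, Perm.smul_def]

lemma mem_ball {x : V} {i : ℕ} {g : Perm V} :
    g ∈ ball Δ G x i ↔ g ∈ G ∧ ∀ z, Δ.dist x z ≤ i → g z = z := by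
  simp [ball, mem_iInf, MulAction.mem_stabilizer_iff, Perm.smul_def]

lemma conj_mem_ball (hG : isAut Δ G) {x : V} {i : ℕ} {g a : Perm V} (hg : g ∈ vstab G x)
    (ha : a ∈ ball Δ G x i) : g * a * g⁻¹ ∈ ball Δ G x i := by
  obtain ⟨hgG, hgx⟩ := mem_vstab.mp hg
  obtain ⟨haG, hfix⟩ := mem_ball.mp ha
  refine mem_ball.mpr ⟨mul_mem (mul_mem hgG haG) (inv_mem hgG), fun z hz => ?_⟩
  have hxg : g⁻¹ x = x := Perm.inv_eq_iff_eq.mpr hgx.symm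
  have hz' : Δ.dist x (g⁻¹ z) ≤ i := by
    rwa [← hxg, hG.dist_apply (inv_mem hgG)]
  rw [Perm.mul_apply, Perm.mul_apply, hfix _ hz', Perm.inv_def, apply_symm_apply]

lemma vstab_le_normalizer_ball (hG : isAut Δ G) (x : V) (i : ℕ) :
    vstab G x ≤ normalizer (ball Δ G x i : Set (Perm V)) := fun g hg =>
  mem_normalizer_iff.mpr fun a =>
    ⟨conj_mem_ball hG hg, fun ha => by
      simpa [mul_assoc] using conj_mem_ball hG (inv_mem hg) ha⟩

lemma exists_mem_apply_eq_of_adj_apply (hG : isAut Δ G) {x y : V}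
    (hx : transOn Δ (vstab G x) x) (hxy : Δ.Adj x y) {H : Subgroup (Perm V)}
    (hxH : vstab G x ≤ H) (hHG : H ≤ G) {g : Perm V} (hg : g ∈ H) {w : V}
    (hw : Δ.Adj (g x) w) : ∃ g' ∈ H, g' y = w := by
  have hadj : Δ.Adj x (g⁻¹ w) := by
    simpa using (hG g⁻¹ (inv_mem (hHG hg)) (g x) w).mpr hw
  obtain ⟨h, hh, hhy⟩ := hx y hxy (g⁻¹ w) hadj
  exact ⟨g * h, mul_mem hg (hxH hh), by simp [Perm.mul_apply, hhy]⟩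

lemma exists_mem_sup_vstab_apply_eq (hconn : Δ.Connected) (hG : isAut Δ G) {x y : V}
    (hx : transOn Δ (vstab G x) x) (hy : transOn Δ (vstab G y) y) (hxy : Δ.Adj x y) (z : V) :
    ∃ g ∈ vstab G x ⊔ vstab G y, g x = z ∨ g y = z := by
  have hHG : vstab G x ⊔ vstab G y ≤ G := sup_le inf_le_left inf_le_left
  induction (SimpleGraph.reachable_iff_reflTransGen x z).mp (hconn x z) with
  | refl => exact ⟨1, one_mem _, Or.inl rfl⟩
  | tail _ huw ih =>
    obtain ⟨g, hg, rfl | rfl⟩ := ih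
    · obtain ⟨g', hg', h⟩ := exists_mem_apply_eq_of_adj_apply hG hx hxy le_sup_left hHG hg huw
      exact ⟨g', hg', Or.inr h⟩
    · obtain ⟨g', hg', h⟩ :=
        exists_mem_apply_eq_of_adj_apply hG hy hxy.symm le_sup_right hHG hg huw
      exact ⟨g', hg', Or.inl h⟩

end Automorphisms

section Normalizer
variable {V : Type*} {K : Subgroup (Perm V)}

lemma apply_apply_eq_of_mem_normalizer {g : Perm V} (hg : g ∈ normalizer (K : Set (Perm V)))
    {v : V} (hv : ∀ k ∈ K, k v = v) {k : Perm V} (hk : k ∈ K) : k (g v) = g v := by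
  have h := hv _ ((mem_normalizer_iff''.mp hg k).mp hk)
  rwa [Perm.mul_apply, Perm.mul_apply, Perm.inv_eq_iff_eq] at h

lemma eq_bot_of_le_normalizer_of_fixes {H : Subgroup (Perm V)} {x y : V}
    (hK : ∀ k ∈ K, k x = x ∧ k y = y) (hH : H ≤ normalizer (K : Set (Perm V)))
    (horbit : ∀ z, ∃ g ∈ H, g x = z ∨ g y = z) : K = ⊥ := by
  refine (eq_bot_iff_forall K).mpr fun k hk => Perm.ext fun z => ?_
  obtain ⟨g, hg, rfl | rfl⟩ := horbit z
  · exact apply_apply_eq_of_mem_normalizer (hH hg) (fun k hk => (hK k hk).1) hk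
  · exact apply_apply_eq_of_mem_normalizer (hH hg) (fun k hk => (hK k hk).2) hk

end Normalizer

theorem stmt3_general {V : Type*} (Δ : SimpleGraph V) (G : Subgroup (Equiv.Perm V))
    (hconn : Δ.Connected) (hG : isAut Δ G) (hstar : StarHyp Δ G)
    {x y : V} (hxy : Δ.Adj x y)
    (h1 : layer (ball Δ G x 1) = layer (vstab G x ⊓ vstab G y))
    (h2 : layer (ball Δ G y 1) = layer (vstab G x ⊓ vstab G y)) :
    layer (vstab G x ⊓ vstab G y) = ⊥ := by
  have hnorm : ∀ v, vstab G v ≤ normalizer (layer (ball Δ G v 1) : Set (Perm V)) := fun v =>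
    (vstab_le_normalizer_ball hG v 1).trans (normalizer_le_normalizer_layer _)
  refine eq_bot_of_le_normalizer_of_fixes (fun k hk => ?_)
    (sup_le (h1 ▸ hnorm x) (h2 ▸ hnorm y))
    (exists_mem_sup_vstab_apply_eq hconn hG (hstar x).1 (hstar y).1 hxy)
  obtain ⟨hkx, hky⟩ := mem_inf.mp (layer_le_self _ hk)
  exact ⟨(mem_vstab.mp hkx).2, (mem_vstab.mp hky).2⟩

theorem stmt3 {V : Type*} [Fintype V] (Δ : SimpleGraph V) (G : Subgroup (Equiv.Perm V))
    (hconn : Δ.Connected) (hG : isAut Δ G) (hstar : StarHyp Δ G)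
    {x y : V} (hxy : Δ.Adj x y)
    (h1 : layer (ball Δ G x 1) = layer (vstab G x ⊓ vstab G y))
    (h2 : layer (ball Δ G y 1) = layer (vstab G x ⊓ vstab G y)) :
    layer (vstab G x ⊓ vstab G y) = ⊥ :=
  stmt3_general Δ G hconn hG hstar hxy h1 h2
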